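/- Let τ(n1,n2,n3,n4) be the Casoratian in the direction n1 of the vector ψ with entries ψ_j(n1,n2,n3,n4) = ρ_j^+ ∏_{i=1}^4 (a_i+k_j)^{n_i} + ρ_j^- ∏_{i=1}^4 (a_i−k_j)^{n_i}. Then τ satisfies the 4D discrete AKP equation at every point: (a2−a3)(a3−a4)(a2−a4) τ_1 τ_234 − (a1−a3)(a3−a4)(a1−a4) τ_2 τ_134 + (a1−a2)(a2−a4)(a1−a4) τ_3 τ_124 − (a1−a2)(a2−a3)(a1−a3) τ_4 τ_123 = 0. -/

import Mathlib

/-!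
In the direction `nᵢ` the entries of `ψ` satisfy `ψ(n + eᵢ) = ψ(n + e₁) - (a₁ - aᵢ) ψ(n)`, so
every shift of `τ` is the Casoratian of the sequences `m ↦ ψ(n₁ + m, …)` acted on by difference
operators `f ↦ f(· + 1) - c f`. Border the `N × (N + 3)` Casorati matrix by three more rows.
Reducing a geometric row `(cᵐ)` by column operations applies the operator with constant `c` to
all other rows, so a border of three geometric rows gives a Vandermonde factor times a triply
shifted Casoratian, while one geometric row next to two unit rows gives a singly shifted one. The
AKP equation is then a Plücker relation between such bordered determinants, which is Cramer's
rule applied to a single row.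
-/

open Matrix

theorem Matrix.det_mul_det_eq_sum_det_updateRow {ι R : Type*} [Fintype ι] [DecidableEq ι]
    [CommRing R] (A M : Matrix ι ι R) (r : ι) :
    A.det * M.det = ∑ i, (A.updateRow i (M r)).det * (M.updateRow r (A i)).det := by
  let L := (detRowAlternating : (ι → R) [⋀^ι]→ₗ[R] R).toMultilinearMap.toLinearMap M r
  have hL : ∀ v, L v = (M.updateRow r v).det := fun v => rfl
  have cramer_rows : A.det • M r = ∑ i, (A.updateRow i (M r)).det • A i := by
    rw [← det_transpose, ← mulVec_cramer, ← vecMul_transpose]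
    ext p
    simp [vecMul, dotProduct, cramer_transpose_apply, mul_comm]
  calc A.det * M.det = L (A.det • M r) := by rw [map_smul, hL, updateRow_eq_self, smul_eq_mul]
    _ = _ := by
      rw [cramer_rows, map_sum]
      exact Finset.sum_congr rfl fun i _ => by rw [map_smul, hL, smul_eq_mul]

section

variable {R : Type*}

def casoratiMatrix {n : ℕ} (f : Fin n → ℕ → R) : Matrix (Fin n) (Fin n) R :=
  of fun i j => f i j

lemma casoratiMatrix_row {n : ℕ} (f : Fin n → ℕ → R) (i : Fin n) :
    casoratiMatrix f i = fun j : Fin n => f i j := rfl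

lemma casoratiMatrix_updateRow {n : ℕ} (f : Fin n → ℕ → R) (i : Fin n) (v : ℕ → R) :
    (casoratiMatrix f).updateRow i (fun j => v j) = casoratiMatrix (Function.update f i v) := by
  ext k j
  rcases eq_or_ne k i with rfl | hk
  · simp [casoratiMatrix]
  · simp [casoratiMatrix, hk]

variable [CommRing R]

def shiftSub (x : R) (f : ℕ → R) : ℕ → R := fun m => f (m + 1) - x * f m

lemma shiftSub_comp_comm {α : Type*} (x y : R) (f : α → ℕ → R) :
    shiftSub x ∘ shiftSub y ∘ f = shiftSub y ∘ shiftSub x ∘ f := by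
  funext a m
  simp only [Function.comp_apply, shiftSub]
  ring

lemma shiftSub_smul (x c : R) (f : ℕ → R) : shiftSub x (c • f) = c • shiftSub x f := by
  funext m
  simp only [shiftSub, Pi.smul_apply, smul_eq_mul]
  ring

lemma shiftSub_pow (x y : R) : shiftSub x (y ^ ·) = (y - x) • (y ^ ·) := by
  funext m
  simp only [shiftSub, pow_succ, Pi.smul_apply, smul_eq_mul]
  ring

lemma shiftSub_comp_of_forall_eq {ι : Type*} (c : R) (F G : ι → ℤ → R)
    (h : ∀ j w, G j w = F j (w + 1) - c * F j w) (n₀ : ℤ) :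
    shiftSub c ∘ (fun j (m : ℕ) => F j (n₀ + m)) = fun j (m : ℕ) => G j (n₀ + m) := by
  funext j m
  simp only [Function.comp_apply, shiftSub, h, Nat.cast_succ, add_assoc]

lemma det_casoratiMatrix_cons_smul {n : ℕ} (c : R) (u : ℕ → R) (f : Fin n → ℕ → R) :
    (casoratiMatrix (Fin.cons (c • u) f)).det = c * (casoratiMatrix (Fin.cons u f)).det := by
  rw [← Fin.update_cons_zero (x := u), ← casoratiMatrix_updateRow,
    show (fun j : Fin (n + 1) => (c • u) j) = c • fun j : Fin (n + 1) => u j from rfl,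
    det_updateRow_smul, casoratiMatrix_updateRow, Fin.update_cons_zero]

lemma det_casoratiMatrix_cons_pow {n : ℕ} (x : R) (f : Fin n → ℕ → R) :
    (casoratiMatrix (Fin.cons (x ^ ·) f)).det = (casoratiMatrix (shiftSub x ∘ f)).det := by
  set g : Fin (n + 1) → ℕ → R := Fin.cons (x ^ ·) f
  -- subtracting `x` times each column from the next one leaves `(1, 0, …, 0)` as the first row
  refine (det_eq_of_forall_col_eq_smul_add_pred (fun _ => x) (A := casoratiMatrix g)
    (B := of fun i => Fin.cons (g i 0) fun j : Fin n => shiftSub x (g i) j) (fun i => rfl)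
    (fun i j => by simp [casoratiMatrix, shiftSub])).trans ?_
  rw [det_succ_row_zero, Fin.sum_univ_succ]
  simp only [g, shiftSub, of_apply, Fin.cons_zero, Fin.cons_succ, Fin.val_zero, Fin.val_succ,
    pow_zero, pow_succ', sub_self, mul_one, one_mul, mul_zero, zero_mul, Finset.sum_const_zero,
    add_zero, Fin.succAbove_zero]
  rfl

lemma det_casoratiMatrix_cons_single {n : ℕ} (f : Fin n → ℕ → R) :
    (casoratiMatrix (Fin.cons (Pi.single n 1) f)).det = (-1) ^ n * (casoratiMatrix f).det := by
  rw [det_succ_row_zero, Finset.sum_eq_single (Fin.last n)]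
  · simp only [casoratiMatrix, of_apply, Fin.cons_zero, Fin.val_last, Pi.single_eq_same, mul_one,
      Fin.succAbove_last]
    rfl
  · intro j _ hj
    have : (j : ℕ) ≠ n := fun h => hj (Fin.ext h)
    simp [casoratiMatrix, this]
  · simp

def casoratiBordered {n : ℕ} (Φ : Fin n → ℕ → R) (u v w : ℕ → R) :
    Matrix (Fin (n + 3)) (Fin (n + 3)) R :=
  casoratiMatrix (Fin.cons u (Fin.cons v (Fin.cons w Φ)))

lemma det_casoratiBordered_row {n : ℕ} (Φ : Fin n → ℕ → R) (u v : ℕ → R) (j : Fin n) :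
    (casoratiBordered Φ u v (Φ j)).det = 0 :=
  det_zero_of_row_eq (i := (0 : Fin (n + 1)).succ.succ) (j := j.succ.succ.succ)
    (fun h => Fin.succ_ne_zero j (Fin.succ_injective _ (Fin.succ_injective _ h)).symm) rfl

lemma det_casoratiBordered_exchange {n : ℕ} (Φ : Fin n → ℕ → R) (x y z t E F : ℕ → R) :
    (casoratiBordered Φ y z t).det * (casoratiBordered Φ E F x).det =
      (casoratiBordered Φ x z t).det * (casoratiBordered Φ E F y).det +
      (casoratiBordered Φ y x t).det * (casoratiBordered Φ E F z).det +
      (casoratiBordered Φ y z x).det * (casoratiBordered Φ E F t).det := by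
  rw [det_mul_det_eq_sum_det_updateRow (r := (0 : Fin (n + 1)).succ.succ), Fin.sum_univ_succ,
    Fin.sum_univ_succ, Fin.sum_univ_succ]
  have hrow (i : Fin n) :
      (casoratiMatrix (Fin.cons E (Fin.cons F (Fin.cons (Φ i) Φ)))).det = 0 :=
    det_casoratiBordered_row Φ E F i
  unfold casoratiBordered
  simp only [casoratiMatrix_row, Fin.cons_zero, Fin.cons_succ, casoratiMatrix_updateRow,
    ← Fin.cons_update, Fin.update_cons_zero, hrow, mul_zero, Finset.sum_const_zero, add_zero]
  ring

lemma det_casoratiBordered_single_single_pow {n : ℕ} (Φ : Fin n → ℕ → R) (x : R) :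
    (casoratiBordered Φ (Pi.single (n + 2) 1) (Pi.single (n + 1) 1) (x ^ ·)).det =
      -(casoratiMatrix (shiftSub x ∘ Φ)).det := by
  rw [casoratiBordered, det_casoratiMatrix_cons_single, det_casoratiMatrix_cons_single,
    det_casoratiMatrix_cons_pow, ← mul_assoc, ← pow_add, Odd.neg_one_pow ⟨n + 1, by ring⟩,
    neg_one_mul]

lemma det_casoratiBordered_pow {n : ℕ} (Φ : Fin n → ℕ → R) (x y z : R) :
    (casoratiBordered Φ (x ^ ·) (y ^ ·) (z ^ ·)).det =
      (y - x) * (z - x) * (z - y) *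
        (casoratiMatrix (shiftSub z ∘ shiftSub y ∘ shiftSub x ∘ Φ)).det := by
  simp only [casoratiBordered, det_casoratiMatrix_cons_pow, Fin.comp_cons, shiftSub_pow,
    shiftSub_smul, det_casoratiMatrix_cons_smul]
  ring

theorem det_casoratiMatrix_akp {n : ℕ} (Φ : Fin n → ℕ → R) (c₁ c₂ c₃ c₄ : R) :
    (c₃ - c₂) * (c₄ - c₃) * (c₄ - c₂) * (casoratiMatrix (shiftSub c₁ ∘ Φ)).det *
        (casoratiMatrix (shiftSub c₄ ∘ shiftSub c₃ ∘ shiftSub c₂ ∘ Φ)).det -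
      (c₃ - c₁) * (c₄ - c₃) * (c₄ - c₁) * (casoratiMatrix (shiftSub c₂ ∘ Φ)).det *
        (casoratiMatrix (shiftSub c₄ ∘ shiftSub c₃ ∘ shiftSub c₁ ∘ Φ)).det +
      (c₂ - c₁) * (c₄ - c₂) * (c₄ - c₁) * (casoratiMatrix (shiftSub c₃ ∘ Φ)).det *
        (casoratiMatrix (shiftSub c₄ ∘ shiftSub c₂ ∘ shiftSub c₁ ∘ Φ)).det -
      (c₂ - c₁) * (c₃ - c₂) * (c₃ - c₁) * (casoratiMatrix (shiftSub c₄ ∘ Φ)).det *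
        (casoratiMatrix (shiftSub c₃ ∘ shiftSub c₂ ∘ shiftSub c₁ ∘ Φ)).det = 0 := by
  have h := det_casoratiBordered_exchange Φ (c₁ ^ ·) (c₂ ^ ·) (c₃ ^ ·) (c₄ ^ ·)
    (Pi.single (n + 2) 1) (Pi.single (n + 1) 1)
  rw [det_casoratiBordered_pow, det_casoratiBordered_pow, det_casoratiBordered_pow,
    det_casoratiBordered_pow, det_casoratiBordered_single_single_pow,
    det_casoratiBordered_single_single_pow, det_casoratiBordered_single_single_pow,
    det_casoratiBordered_single_single_pow, shiftSub_comp_comm c₁ c₃,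
    shiftSub_comp_comm c₁ c₂] at h
  linear_combination -h

theorem casoratian_akp_of_dispersion {N : ℕ} (a1 a2 a3 a4 : R)
    (ψ : Fin N → ℤ → ℤ → ℤ → ℤ → R)
    (h2 : ∀ j n1 n2 n3 n4,
      ψ j n1 (n2 + 1) n3 n4 = ψ j (n1 + 1) n2 n3 n4 - (a1 - a2) * ψ j n1 n2 n3 n4)
    (h3 : ∀ j n1 n2 n3 n4,
      ψ j n1 n2 (n3 + 1) n4 = ψ j (n1 + 1) n2 n3 n4 - (a1 - a3) * ψ j n1 n2 n3 n4)
    (h4 : ∀ j n1 n2 n3 n4,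
      ψ j n1 n2 n3 (n4 + 1) = ψ j (n1 + 1) n2 n3 n4 - (a1 - a4) * ψ j n1 n2 n3 n4)
    (τ : ℤ → ℤ → ℤ → ℤ → R)
    (hτ : ∀ n1 n2 n3 n4,
      τ n1 n2 n3 n4 = (casoratiMatrix fun j (m : ℕ) => ψ j (n1 + m) n2 n3 n4).det)
    (n1 n2 n3 n4 : ℤ) :
    (a2 - a3) * (a3 - a4) * (a2 - a4) * τ (n1 + 1) n2 n3 n4 * τ n1 (n2 + 1) (n3 + 1) (n4 + 1) -
      (a1 - a3) * (a3 - a4) * (a1 - a4) * τ n1 (n2 + 1) n3 n4 * τ (n1 + 1) n2 (n3 + 1) (n4 + 1) +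
      (a1 - a2) * (a2 - a4) * (a1 - a4) * τ n1 n2 (n3 + 1) n4 * τ (n1 + 1) (n2 + 1) n3 (n4 + 1) -
      (a1 - a2) * (a2 - a3) * (a1 - a3) * τ n1 n2 n3 (n4 + 1) * τ (n1 + 1) (n2 + 1) (n3 + 1) n4 =
      0 := by
  have shift1 (n1 n2 n3 n4 : ℤ) : shiftSub 0 ∘ (fun j (m : ℕ) => ψ j (n1 + m) n2 n3 n4) =
      fun j (m : ℕ) => ψ j (n1 + 1 + m) n2 n3 n4 := by
    funext j m
    simp only [Function.comp_apply, shiftSub, zero_mul, sub_zero, Nat.cast_succ]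
    rw [add_right_comm, add_assoc]
  have shift2 (n1 n2 n3 n4 : ℤ) := shiftSub_comp_of_forall_eq (a1 - a2)
    (fun j w => ψ j w n2 n3 n4) (fun j w => ψ j w (n2 + 1) n3 n4) (fun j w => h2 j w n2 n3 n4) n1
  have shift3 (n1 n2 n3 n4 : ℤ) := shiftSub_comp_of_forall_eq (a1 - a3)
    (fun j w => ψ j w n2 n3 n4) (fun j w => ψ j w n2 (n3 + 1) n4) (fun j w => h3 j w n2 n3 n4) n1
  have shift4 (n1 n2 n3 n4 : ℤ) := shiftSub_comp_of_forall_eq (a1 - a4)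
    (fun j w => ψ j w n2 n3 n4) (fun j w => ψ j w n2 n3 (n4 + 1)) (fun j w => h4 j w n2 n3 n4) n1
  have key := det_casoratiMatrix_akp (fun j (m : ℕ) => ψ j (n1 + m) n2 n3 n4) 0 (a1 - a2)
    (a1 - a3) (a1 - a4)
  simp only [shift1, shift2, shift3, shift4, ← hτ] at key
  linear_combination key

end

theorem stmt_14_general (N : ℕ) (a1 a2 a3 a4 : ℂ) (k ρp ρm : Fin N → ℂ)
    (ha1 : ∀ j, a1 + k j ≠ 0) (ha1' : ∀ j, a1 - k j ≠ 0)
    (ha2 : ∀ j, a2 + k j ≠ 0) (ha2' : ∀ j, a2 - k j ≠ 0)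
    (ha3 : ∀ j, a3 + k j ≠ 0) (ha3' : ∀ j, a3 - k j ≠ 0)
    (ha4 : ∀ j, a4 + k j ≠ 0) (ha4' : ∀ j, a4 - k j ≠ 0)
    (ψ : Fin N → ℤ → ℤ → ℤ → ℤ → ℂ)
    (hψ : ∀ j n1 n2 n3 n4, ψ j n1 n2 n3 n4 =
      ρp j * (a1 + k j) ^ n1 * (a2 + k j) ^ n2 * (a3 + k j) ^ n3 * (a4 + k j) ^ n4 +
      ρm j * (a1 - k j) ^ n1 * (a2 - k j) ^ n2 * (a3 - k j) ^ n3 * (a4 - k j) ^ n4)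
    (τ : ℤ → ℤ → ℤ → ℤ → ℂ)
    (hτ : ∀ n1 n2 n3 n4, τ n1 n2 n3 n4 =
      (Matrix.of fun j m : Fin N => ψ j (n1 + (m.1 : ℤ)) n2 n3 n4).det) :
    ∀ n1 n2 n3 n4 : ℤ,
      (a2 - a3) * (a3 - a4) * (a2 - a4) * τ (n1 + 1) n2 n3 n4 * τ n1 (n2 + 1) (n3 + 1) (n4 + 1) -
      (a1 - a3) * (a3 - a4) * (a1 - a4) * τ n1 (n2 + 1) n3 n4 * τ (n1 + 1) n2 (n3 + 1) (n4 + 1) +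
      (a1 - a2) * (a2 - a4) * (a1 - a4) * τ n1 n2 (n3 + 1) n4 * τ (n1 + 1) (n2 + 1) n3 (n4 + 1) -
      (a1 - a2) * (a2 - a3) * (a1 - a3) * τ n1 n2 n3 (n4 + 1) * τ (n1 + 1) (n2 + 1) (n3 + 1) n4 = 0 := by
  have dispersion : ∀ j n1 n2 n3 n4,
      ψ j n1 (n2 + 1) n3 n4 = ψ j (n1 + 1) n2 n3 n4 - (a1 - a2) * ψ j n1 n2 n3 n4 ∧
      ψ j n1 n2 (n3 + 1) n4 = ψ j (n1 + 1) n2 n3 n4 - (a1 - a3) * ψ j n1 n2 n3 n4 ∧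
      ψ j n1 n2 n3 (n4 + 1) = ψ j (n1 + 1) n2 n3 n4 - (a1 - a4) * ψ j n1 n2 n3 n4 := by
    intro j n1 n2 n3 n4
    simp only [hψ, zpow_add_one₀ (ha1 j), zpow_add_one₀ (ha1' j), zpow_add_one₀ (ha2 j),
      zpow_add_one₀ (ha2' j), zpow_add_one₀ (ha3 j), zpow_add_one₀ (ha3' j),
      zpow_add_one₀ (ha4 j), zpow_add_one₀ (ha4' j)]
    exact ⟨by ring, by ring, by ring⟩
  exact casoratian_akp_of_dispersion a1 a2 a3 a4 ψ
    (fun j n1 n2 n3 n4 => (dispersion j n1 n2 n3 n4).1)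
    (fun j n1 n2 n3 n4 => (dispersion j n1 n2 n3 n4).2.1)
    (fun j n1 n2 n3 n4 => (dispersion j n1 n2 n3 n4).2.2) τ hτ

theorem stmt_14 (N : ℕ) (hN : 1 ≤ N) (a1 a2 a3 a4 : ℂ) (k ρp ρm : Fin N → ℂ)
    (ha1 : ∀ j, a1 + k j ≠ 0) (ha1' : ∀ j, a1 - k j ≠ 0)
    (ha2 : ∀ j, a2 + k j ≠ 0) (ha2' : ∀ j, a2 - k j ≠ 0)
    (ha3 : ∀ j, a3 + k j ≠ 0) (ha3' : ∀ j, a3 - k j ≠ 0)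
    (ha4 : ∀ j, a4 + k j ≠ 0) (ha4' : ∀ j, a4 - k j ≠ 0)
    (ψ : Fin N → ℤ → ℤ → ℤ → ℤ → ℂ)
    (hψ : ∀ j n1 n2 n3 n4, ψ j n1 n2 n3 n4 =
      ρp j * (a1 + k j) ^ n1 * (a2 + k j) ^ n2 * (a3 + k j) ^ n3 * (a4 + k j) ^ n4 +
      ρm j * (a1 - k j) ^ n1 * (a2 - k j) ^ n2 * (a3 - k j) ^ n3 * (a4 - k j) ^ n4)
    (τ : ℤ → ℤ → ℤ → ℤ → ℂ)
    (hτ : ∀ n1 n2 n3 n4, τ n1 n2 n3 n4 =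
      (Matrix.of fun j m : Fin N => ψ j (n1 + (m.1 : ℤ)) n2 n3 n4).det) :
    ∀ n1 n2 n3 n4 : ℤ,
      (a2 - a3) * (a3 - a4) * (a2 - a4) * τ (n1 + 1) n2 n3 n4 * τ n1 (n2 + 1) (n3 + 1) (n4 + 1) -
      (a1 - a3) * (a3 - a4) * (a1 - a4) * τ n1 (n2 + 1) n3 n4 * τ (n1 + 1) n2 (n3 + 1) (n4 + 1) +
      (a1 - a2) * (a2 - a4) * (a1 - a4) * τ n1 n2 (n3 + 1) n4 * τ (n1 + 1) (n2 + 1) n3 (n4 + 1) -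
      (a1 - a2) * (a2 - a3) * (a1 - a3) * τ n1 n2 n3 (n4 + 1) * τ (n1 + 1) (n2 + 1) (n3 + 1) n4 = 0 :=
  stmt_14_general N a1 a2 a3 a4 k ρp ρm ha1 ha1' ha2 ha2' ha3 ha3' ha4 ha4' ψ hψ τ hτ
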